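/- arXiv:2504.09951 — 5 statements merged into one kernel-verified Lean document; each statement's English description precedes it below -/
import Mathlib

section
/- Under the stochastic subgradient oracle model with constants B, G > 0 and anchor x₀ ∈ X, let the projected stochastic Halpern iteration be run with parameters satisfying β_k ∈ (0, 1/2] and 0 < τ_k ≤ √(β_k(1−β_k))/(√6·B). Then for every k ≥ 0 and every X-valued random point x that is measurable with respect to ω₀, …, ω_{k−1} (in particular any deterministic x ∈ X), almost surely: 2τ_k·(f(x_k) − f(x)) + E_k‖x_{k+1} − x‖² ≤ (1−β_k)‖x_k − x‖² + β_k‖x₀ − x‖² + β_k·G²/(3B²). -/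
open MeasureTheory
open scoped RealInnerProductSpace

/-!
Fix the past samples, so that `y = x_k` and `z = x` are constants and only `ω_k` is random.
The projection onto `X` is nonexpansive towards `z ∈ X`, so it suffices to bound
`E‖c - τ g(y, ω) - z‖²` with `c = β x₀ + (1 - β) y`. Expanding the square, the cross term is
split as `⟪y - z, ḡ⟫ - β ⟪y - x₀, ḡ⟫`; the first part pays for `f y - f z` by the subgradient
inequality, and the second, together with the variance term `τ² E‖g‖²`, is absorbed by the
`-β(1 - β)‖y - x₀‖²` coming from the convex combination `c`, via Young's inequality with weight
`(1 + β)/(1 - β)` and the bound (BG-0). The step size bound `6 B² τ² ≤ β(1 - β)` and `β ≤ 1/2`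
are exactly what make this absorption work.
-/

theorem halpern_young_bound {β τ B C D s M p : ℝ} (hβ0 : 0 < β) (hβ : β ≤ 1 / 2) (hB : 0 < B)
    (hτ0 : 0 ≤ τ) (hτ : 6 * B ^ 2 * τ ^ 2 ≤ β * (1 - β)) (hp : p ≤ D * s)
    (hsM : s ^ 2 ≤ M) (hM : M ≤ B ^ 2 * D ^ 2 + C ^ 2) :
    2 * τ * β * p + τ ^ 2 * M ≤ β * (1 - β) * D ^ 2 + β * C ^ 2 / (3 * B ^ 2) := by
  have h1β : 0 < 1 - β := by linarith
  have h1β2 : 0 < 1 - β ^ 2 := by nlinarith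
  have hM0 : 0 ≤ M := (sq_nonneg s).trans hsM
  have hyoung : (1 - β ^ 2) * (2 * τ * β * p)
      ≤ (1 + β) ^ 2 * τ ^ 2 * M + (1 - β) ^ 2 * β ^ 2 * D ^ 2 := by
    nlinarith [sq_nonneg ((1 + β) * (τ * s) - (1 - β) * (β * D)),
      mul_le_mul_of_nonneg_left hp (mul_nonneg h1β2.le (by positivity : 0 ≤ 2 * τ * β)),
      mul_le_mul_of_nonneg_left hsM (by positivity : 0 ≤ (1 + β) ^ 2 * τ ^ 2)]
  have hstep : 6 * B ^ 2 * τ ^ 2 * M ≤ β * (1 - β) * (B ^ 2 * D ^ 2 + C ^ 2) :=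
    (mul_le_mul_of_nonneg_right hτ hM0).trans
      (mul_le_mul_of_nonneg_left hM (mul_nonneg hβ0.le h1β.le))
  have hβD : 0 ≤ (1 - 2 * β) * β * (1 - β) * (B ^ 2 * D ^ 2) :=
    mul_nonneg (mul_nonneg (mul_nonneg (by linarith) hβ0.le) h1β.le) (by positivity)
  have key : (1 - β ^ 2) * (3 * B ^ 2 * (2 * τ * β * p + τ ^ 2 * M))
      ≤ (1 - β ^ 2) * (3 * B ^ 2 * β * (1 - β) * D ^ 2 + β * C ^ 2) := by
    nlinarith [mul_le_mul_of_nonneg_left hyoung (by positivity : (0:ℝ) ≤ 3 * B ^ 2),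
      mul_le_mul_of_nonneg_left hstep (by linarith : (0:ℝ) ≤ 1 + β)]
  rw [add_div' _ _ _ (by positivity), le_div_iff₀ (by positivity)]
  nlinarith [le_of_mul_le_mul_left key h1β2]

section

variable {E : Type*} [NormedAddCommGroup E] [InnerProductSpace ℝ E]

theorem real_inner_sub_nonpos_of_forall_norm_le {K : Set E} {u p z : E} (hK : Convex ℝ K)
    (hp : p ∈ K) (hmin : ∀ y ∈ K, ‖p - u‖ ≤ ‖y - u‖) (hz : z ∈ K) : ⟪u - p, z - p⟫ ≤ 0 := by
  refine (norm_eq_iInf_iff_real_inner_le_zero hK hp).mp ?_ z hz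
  have : Nonempty K := ⟨⟨p, hp⟩⟩
  refine le_antisymm (le_ciInf fun y => by simpa only [norm_sub_rev] using hmin y y.2) ?_
  exact ciInf_le ⟨0, by rintro _ ⟨y, rfl⟩; exact norm_nonneg _⟩ (⟨p, hp⟩ : K)

theorem norm_sub_sq_le_of_forall_norm_le {K : Set E} {u p z : E} (hK : Convex ℝ K)
    (hp : p ∈ K) (hmin : ∀ y ∈ K, ‖p - u‖ ≤ ‖y - u‖) (hz : z ∈ K) : ‖p - z‖ ^ 2 ≤ ‖u - z‖ ^ 2 := by
  have hobtuse := real_inner_sub_nonpos_of_forall_norm_le hK hp hmin hz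
  rw [norm_sub_rev p z, show u - z = (u - p) - (z - p) by abel, norm_sub_sq_real (u - p)]
  linarith [sq_nonneg ‖u - p‖]

theorem norm_smul_add_one_sub_smul_sq (a b : E) (t : ℝ) :
    ‖t • a + (1 - t) • b‖ ^ 2
      = t * ‖a‖ ^ 2 + (1 - t) * ‖b‖ ^ 2 - t * (1 - t) * ‖a - b‖ ^ 2 := by
  rw [norm_add_sq_real, norm_sub_sq_real, norm_smul, norm_smul, real_inner_smul_left,
    real_inner_smul_right, mul_pow, mul_pow, Real.norm_eq_abs, Real.norm_eq_abs, sq_abs, sq_abs]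
  ring

variable [CompleteSpace E] {Ω : Type*} [MeasurableSpace Ω] {μ : Measure Ω}
  [IsProbabilityMeasure μ] {G : Ω → E}

theorem integral_norm_sub_smul_sq (hG : MemLp G 2 μ) (v : E) (t : ℝ) :
    ∫ ω, ‖v - t • G ω‖ ^ 2 ∂μ
      = ‖v‖ ^ 2 - 2 * t * ⟪v, ∫ ω, G ω ∂μ⟫ + t ^ 2 * ∫ ω, ‖G ω‖ ^ 2 ∂μ := by
  have hGint : Integrable G μ := hG.integrable one_le_two
  have hexpand : ∀ ω, ‖v - t • G ω‖ ^ 2 = ‖v‖ ^ 2 - 2 * t * ⟪v, G ω⟫ + t ^ 2 * ‖G ω‖ ^ 2 := by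
    intro ω
    rw [norm_sub_sq_real, real_inner_smul_right, norm_smul, mul_pow, Real.norm_eq_abs, sq_abs]
    ring
  simp_rw [hexpand]
  have hinner : Integrable (fun ω => 2 * t * ⟪v, G ω⟫) μ := (hGint.const_inner v).const_mul _
  rw [integral_add (f := fun ω => ‖v‖ ^ 2 - 2 * t * ⟪v, G ω⟫) ((integrable_const _).sub hinner)
      (hG.norm.integrable_sq.const_mul _),
    integral_sub (integrable_const _) hinner, integral_const, integral_const_mul,
    integral_const_mul, integral_inner hGint]
  simp

theorem norm_integral_sq_le_integral_norm_sq (hG : MemLp G 2 μ) :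
    ‖∫ ω, G ω ∂μ‖ ^ 2 ≤ ∫ ω, ‖G ω‖ ^ 2 ∂μ := by
  have hvar := integral_norm_sub_smul_sq hG (∫ ω, G ω ∂μ) 1
  have hnonneg : 0 ≤ ∫ ω, ‖∫ ω, G ω ∂μ - (1 : ℝ) • G ω‖ ^ 2 ∂μ :=
    integral_nonneg fun _ => by positivity
  rw [real_inner_self_eq_norm_sq] at hvar
  linarith

theorem integral_norm_sub_sq_le_of_forall_norm_le {K : Set E} (hK : Convex ℝ K) {P : E → E}
    (hPK : ∀ u, P u ∈ K) (hP : ∀ u, ∀ y ∈ K, ‖P u - u‖ ≤ ‖y - u‖) (hG : MemLp G 2 μ)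
    (c : E) (t : ℝ) {z : E} (hz : z ∈ K) :
    ∫ ω, ‖P (c - t • G ω) - z‖ ^ 2 ∂μ
      ≤ ‖c - z‖ ^ 2 - 2 * t * ⟪c - z, ∫ ω, G ω ∂μ⟫ + t ^ 2 * ∫ ω, ‖G ω‖ ^ 2 ∂μ := by
  rw [← integral_norm_sub_smul_sq hG]
  -- no measurability of `P` is needed: a non-integrable left side has integral `0`
  refine integral_mono_of_nonneg (.of_forall fun _ => by positivity)
    ((memLp_const (c - z)).sub (hG.const_smul t)).norm.integrable_sq (.of_forall fun ω => ?_)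
  dsimp only
  rw [sub_right_comm c z]
  exact norm_sub_sq_le_of_forall_norm_le hK (hPK _) (hP _) hz

theorem halpern_step_bound {K : Set E} (hK : Convex ℝ K) {P : E → E}
    (hPK : ∀ u, P u ∈ K) (hP : ∀ u, ∀ y ∈ K, ‖P u - u‖ ≤ ‖y - u‖) {f : E → ℝ} {x₀ y z : E}
    (hz : z ∈ K) {β τ B C : ℝ} (hβ0 : 0 < β) (hβ : β ≤ 1 / 2) (hB : 0 < B) (hτ0 : 0 ≤ τ)
    (hτ : 6 * B ^ 2 * τ ^ 2 ≤ β * (1 - β)) (hG : MemLp G 2 μ)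
    (hsub : f y + ⟪∫ ω, G ω ∂μ, z - y⟫ ≤ f z)
    (hGB : ∫ ω, ‖G ω‖ ^ 2 ∂μ ≤ B ^ 2 * ‖y - x₀‖ ^ 2 + C ^ 2) :
    2 * τ * (f y - f z) + ∫ ω, ‖P (β • x₀ + (1 - β) • y - τ • G ω) - z‖ ^ 2 ∂μ
      ≤ (1 - β) * ‖y - z‖ ^ 2 + β * ‖x₀ - z‖ ^ 2 + β * C ^ 2 / (3 * B ^ 2) := by
  set gbar := ∫ ω, G ω ∂μ
  have hproj := integral_norm_sub_sq_le_of_forall_norm_le hK hPK hP hG (β • x₀ + (1 - β) • y) τ hz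
  have hinner : ⟪β • x₀ + (1 - β) • y - z, gbar⟫ = ⟪y - z, gbar⟫ - β * ⟪y - x₀, gbar⟫ := by
    rw [show β • x₀ + (1 - β) • y - z = (y - z) - β • (y - x₀) by module, inner_sub_left,
      real_inner_smul_left]
  have hnorm : ‖β • x₀ + (1 - β) • y - z‖ ^ 2
      = β * ‖x₀ - z‖ ^ 2 + (1 - β) * ‖y - z‖ ^ 2 - β * (1 - β) * ‖y - x₀‖ ^ 2 := by
    rw [show β • x₀ + (1 - β) • y - z = β • (x₀ - z) + (1 - β) • (y - z) by module,
      norm_smul_add_one_sub_smul_sq, sub_sub_sub_cancel_right, norm_sub_rev x₀ y]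
  have hsubgrad : 2 * τ * (f y - f z) ≤ 2 * τ * ⟪y - z, gbar⟫ := by
    refine mul_le_mul_of_nonneg_left ?_ (by positivity)
    rw [← neg_sub y z, inner_neg_right, real_inner_comm] at hsub
    linarith
  have hyoung := halpern_young_bound hβ0 hβ hB hτ0 hτ (real_inner_le_norm (y - x₀) gbar)
    (norm_integral_sq_le_integral_norm_sq hG) hGB
  rw [hinner, hnorm] at hproj
  linarith

end

/-- The iterate after `k` steps is a function of the first `k` samples, and `E_k` is the
integral over the fresh sample `ω_k`. -/
theorem halpern_sgd_one_iteration_general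
    {d : ℕ} {Ω : Type*} [MeasurableSpace Ω] (μ : Measure Ω) [IsProbabilityMeasure μ]
    (X : Set (EuclideanSpace ℝ (Fin d))) (hXconv : Convex ℝ X)
    (f : EuclideanSpace ℝ (Fin d) → ℝ)
    -- metric projection onto `X`
    (proj : EuclideanSpace ℝ (Fin d) → EuclideanSpace ℝ (Fin d))
    (hprojX : ∀ u, proj u ∈ X)
    (hproj : ∀ u, ∀ y ∈ X, ‖proj u - u‖ ≤ ‖y - u‖)
    (x₀ : EuclideanSpace ℝ (Fin d))
    (B G : ℝ) (hB : 0 < B)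
    -- stochastic subgradient oracle: unbiased and satisfying (BG-0)
    (g : EuclideanSpace ℝ (Fin d) → Ω → EuclideanSpace ℝ (Fin d))
    (hgL2 : ∀ x, MemLp (g x) 2 μ)
    (hunbiased : ∀ x y, f x + ⟪∫ ω, g x ω ∂μ, y - x⟫ ≤ f y)
    (hBG : ∀ x, ∫ ω, ‖g x ω‖ ^ 2 ∂μ ≤ B ^ 2 * ‖x - x₀‖ ^ 2 + G ^ 2)
    -- parameters
    (β τ : ℕ → ℝ)
    (hβ : ∀ k, β k ∈ Set.Ioc (0 : ℝ) (1 / 2))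
    (hτpos : ∀ k, 0 < τ k)
    (hτle : ∀ k, τ k ≤ Real.sqrt (β k * (1 - β k)) / (Real.sqrt 6 * B))
    -- the projected stochastic Halpern iteration
    (x : (k : ℕ) → (Fin k → Ω) → EuclideanSpace ℝ (Fin d))
    (hxrec : ∀ k (w : Fin (k + 1) → Ω),
      x (k + 1) w = proj (β k • x₀ + (1 - β k) • x k (Fin.init w)
        - τ k • g (x k (Fin.init w)) (w (Fin.last k))))
    (k : ℕ)
    -- an `X`-valued point measurable with respect to `ω₀, …, ω_{k-1}`
    (xx : (Fin k → Ω) → EuclideanSpace ℝ (Fin d))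
    (hxxX : ∀ w, xx w ∈ X) :
    ∀ᵐ w ∂(Measure.pi fun _ : Fin k => μ),
      2 * τ k * (f (x k w) - f (xx w))
          + ∫ ω, ‖x (k + 1) (Fin.snoc w ω) - xx w‖ ^ 2 ∂μ
        ≤ (1 - β k) * ‖x k w - xx w‖ ^ 2 + β k * ‖x₀ - xx w‖ ^ 2
          + β k * G ^ 2 / (3 * B ^ 2) := by
  obtain ⟨hβ0, hβ⟩ := hβ k
  have hτ : 6 * B ^ 2 * τ k ^ 2 ≤ β k * (1 - β k) := by
    have hsq := pow_le_pow_left₀ (hτpos k).le (hτle k) 2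
    rw [div_pow, mul_pow, Real.sq_sqrt (by nlinarith), Real.sq_sqrt (by norm_num),
      le_div_iff₀ (by positivity)] at hsq
    linarith
  refine .of_forall fun w => ?_
  simp only [hxrec, Fin.init_snoc, Fin.snoc_last]
  exact halpern_step_bound hXconv hprojX hproj (hxxX w) hβ0 hβ hB (hτpos k).le hτ (hgL2 _)
    (hunbiased _ _) (hBG _)

/-- One-iteration inequality for the projected stochastic Halpern iteration
under the Blum–Gladyshev assumption (BG-0).  The iterate after `k` steps is a
function of the first `k` i.i.d. samples; `E_k`, the conditional expectation
given `ω₀, …, ω_{k-1}`, is realized as the integral over the fresh sample. -/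
theorem halpern_sgd_one_iteration
    {d : ℕ} {Ω : Type*} [MeasurableSpace Ω] (μ : Measure Ω) [IsProbabilityMeasure μ]
    (X : Set (EuclideanSpace ℝ (Fin d))) (hXne : X.Nonempty) (hXcl : IsClosed X)
    (hXconv : Convex ℝ X)
    (f : EuclideanSpace ℝ (Fin d) → ℝ) (hfconv : ConvexOn ℝ Set.univ f)
    -- metric projection onto `X`
    (proj : EuclideanSpace ℝ (Fin d) → EuclideanSpace ℝ (Fin d))
    (hprojX : ∀ u, proj u ∈ X)
    (hproj : ∀ u, ∀ y ∈ X, ‖proj u - u‖ ≤ ‖y - u‖)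
    (x₀ : EuclideanSpace ℝ (Fin d)) (hx₀ : x₀ ∈ X)
    (B G : ℝ) (hB : 0 < B) (hG : 0 < G)
    -- stochastic subgradient oracle: unbiased and satisfying (BG-0)
    (g : EuclideanSpace ℝ (Fin d) → Ω → EuclideanSpace ℝ (Fin d))
    (hgmeas : Measurable (Function.uncurry g))
    (hgL2 : ∀ x, MemLp (g x) 2 μ)
    (hunbiased : ∀ x y, f x + ⟪∫ ω, g x ω ∂μ, y - x⟫ ≤ f y)
    (hBG : ∀ x, ∫ ω, ‖g x ω‖ ^ 2 ∂μ ≤ B ^ 2 * ‖x - x₀‖ ^ 2 + G ^ 2)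
    -- parameters
    (β τ : ℕ → ℝ)
    (hβ : ∀ k, β k ∈ Set.Ioc (0 : ℝ) (1 / 2))
    (hτpos : ∀ k, 0 < τ k)
    (hτle : ∀ k, τ k ≤ Real.sqrt (β k * (1 - β k)) / (Real.sqrt 6 * B))
    -- the projected stochastic Halpern iteration
    (x : (k : ℕ) → (Fin k → Ω) → EuclideanSpace ℝ (Fin d))
    (hx0 : ∀ w, x 0 w = x₀)
    (hxrec : ∀ k (w : Fin (k + 1) → Ω),
      x (k + 1) w = proj (β k • x₀ + (1 - β k) • x k (Fin.init w)
        - τ k • g (x k (Fin.init w)) (w (Fin.last k))))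
    (k : ℕ)
    -- an `X`-valued point measurable with respect to `ω₀, …, ω_{k-1}`
    (xx : (Fin k → Ω) → EuclideanSpace ℝ (Fin d))
    (hxxmeas : Measurable xx) (hxxX : ∀ w, xx w ∈ X) :
    ∀ᵐ w ∂(Measure.pi fun _ : Fin k => μ),
      2 * τ k * (f (x k w) - f (xx w))
          + ∫ ω, ‖x (k + 1) (Fin.snoc w ω) - xx w‖ ^ 2 ∂μ
        ≤ (1 - β k) * ‖x k w - xx w‖ ^ 2 + β k * ‖x₀ - xx w‖ ^ 2
          + β k * G ^ 2 / (3 * B ^ 2) :=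
  halpern_sgd_one_iteration_general μ X hXconv f proj hprojX hproj x₀ B G hB g hgL2 hunbiased hBG β
    τ hβ hτpos hτle x hxrec k xx hxxX
end

section
/- Under the stochastic oracle model for the Lagrangian with constants B, G > 0 and anchor z₀ = (x₀, y₀) ∈ Z, let the stochastic gradient descent–ascent iteration with Halpern anchoring be run with β_k = 1/(k+2) and arbitrary step sizes τ_k > 0. Then for every realization of the samples, every z ∈ Z, and every K > 0: Σ_{k=0}^{K−1} 2τ_k·⟨F(z_k), z_k − z⟩ − (3 + log(K+1))·‖z − z₀‖² ≤ Σ_{k=0}^{K−1} [ (2τ_k²/(1−β_k))·‖F̃(z_k, ω_k)‖² + 2τ_k·⟨F(z_k) − F̃(z_k, ω_k), z_k⟩ ] + ‖Σ_{k=0}^{K−1} τ_k·(F(z_k) − F̃(z_k, ω_k))‖² + 2‖z₀‖² − Σ_{k=0}^{K−1} [ ((1−β_k)/2)·‖z_{k+1} − z_k‖² + β_k·‖z₀ − z_{k+1}‖² ]. -/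
open MeasureTheory
open scoped RealInnerProductSpace

noncomputable section

/-- The primal-dual space `ℝ^d × ℝ^n` with the Euclidean (ℓ²) product structure. -/
abbrev PD (d n : ℕ) : Type :=
  WithLp 2 ((EuclideanSpace ℝ (Fin d)) × (EuclideanSpace ℝ (Fin n)))

instance (d n : ℕ) : MeasurableSpace (PD d n) :=
  MeasurableSpace.comap (WithLp.equiv 2 _) inferInstance

/-- Primal component of a primal-dual point. -/
def px {d n : ℕ} (z : PD d n) : EuclideanSpace ℝ (Fin d) := (WithLp.equiv 2 _ z).1

/-- Dual component of a primal-dual point. -/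
def py {d n : ℕ} (z : PD d n) : EuclideanSpace ℝ (Fin n) := (WithLp.equiv 2 _ z).2

/-- Pair a primal and a dual vector into a primal-dual point. -/
def pmk {d n : ℕ} (x : EuclideanSpace ℝ (Fin d)) (y : EuclideanSpace ℝ (Fin n)) : PD d n :=
  (WithLp.equiv 2 _).symm (x, y)

/-- `u` is a (convex) subgradient of `f` at `x`. -/
def IsSubgrad {d : ℕ} (f : EuclideanSpace ℝ (Fin d) → ℝ)
    (x u : EuclideanSpace ℝ (Fin d)) : Prop :=
  ∀ y, f x + ⟪u, y - x⟫ ≤ f y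

/-!
The projection onto the convex set `Z` satisfies the variational inequality
`⟪u - P u, w - P u⟫ ≤ 0` for `w ∈ Z`. Applied to one anchored step and expanded by the
three-point identity, it bounds `2 τ_k ⟪F̃_k, z_k - z⟫` by a telescoping difference
`‖z_k - z‖² - ‖z_{k+1} - z‖²`, an anchor term `β_k ‖z - z₀‖²` and a Young term for the
stochastic gradient. Summing, `∑ β_k ≤ log (K + 1)` controls the anchor terms, and replacing
`F̃` by its mean `F` costs the noise terms, of which `-2 ⟪∑ τ_k (F - F̃)_k, z⟫` is absorbed
into `‖∑ τ_k (F - F̃)_k‖² + 2 ‖z - z₀‖² + 2 ‖z₀‖²`.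
-/

section InnerProductSpace

variable {E : Type*} [NormedAddCommGroup E] [InnerProductSpace ℝ E]

theorem real_inner_sub_le_zero_of_norm_sub_le {Z : Set E} (hZ : Convex ℝ Z) {u p : E}
    (hp : p ∈ Z) (hmin : ∀ w ∈ Z, ‖p - u‖ ≤ ‖w - u‖) {w : E} (hw : w ∈ Z) :
    ⟪u - p, w - p⟫ ≤ 0 := by
  have : Nonempty Z := ⟨⟨p, hp⟩⟩
  refine (norm_eq_iInf_iff_real_inner_le_zero hZ hp).mp (le_antisymm ?_ ?_) w hw
  · exact le_ciInf fun v => by simpa only [norm_sub_rev u] using hmin v v.2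
  · exact ciInf_le (f := fun v : Z => ‖u - (v : E)‖)
      ⟨0, Set.forall_mem_range.2 fun v => norm_nonneg _⟩ ⟨p, hp⟩

theorem two_mul_real_inner_le_div_add_mul {t : ℝ} (ht : 0 < t) (a b : E) :
    2 * ⟪a, b⟫ ≤ ‖a‖ ^ 2 / t + t * ‖b‖ ^ 2 := by
  have h := norm_sub_sq_real a (t • b)
  rw [real_inner_smul_right, norm_smul, Real.norm_of_nonneg ht.le] at h
  rw [div_add' _ _ _ ht.ne', le_div_iff₀ ht]
  nlinarith [sq_nonneg ‖a - t • b‖]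

theorem neg_two_mul_real_inner_le (s w a : E) :
    -(2 * ⟪s, w⟫) ≤ ‖s‖ ^ 2 + 2 * ‖w - a‖ ^ 2 + 2 * ‖a‖ ^ 2 := by
  have hw : ‖w‖ ^ 2 ≤ 2 * (‖w - a‖ ^ 2 + ‖a‖ ^ 2) :=
    calc ‖w‖ ^ 2 ≤ (‖w - a‖ + ‖a‖) ^ 2 := by
          gcongr; simpa using norm_add_le (w - a) a
      _ ≤ 2 * (‖w - a‖ ^ 2 + ‖a‖ ^ 2) := add_sq_le
  linarith [norm_add_sq_real s w, sq_nonneg ‖s + w‖]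

/-- One anchored projected step `P = proj (β A + (1 - β) C - τ g)`, tested against `W`. -/
theorem two_mul_real_inner_le_of_anchored_step {A C P W g : E} {β τ : ℝ} (hβ : β < 1)
    (hVI : ⟪(β • A + (1 - β) • C - τ • g) - P, W - P⟫ ≤ 0) :
    2 * τ * ⟪g, C - W⟫ ≤ β * ‖A - W‖ ^ 2 + (1 - β) * ‖C - W‖ ^ 2 - ‖P - W‖ ^ 2
      - β * ‖A - P‖ ^ 2 - ((1 - β) / 2) * ‖C - P‖ ^ 2 + (2 * τ ^ 2 / (1 - β)) * ‖g‖ ^ 2 := by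
  have hA : A - W = (A - P) - (W - P) := by abel
  have hC : C - W = (C - P) - (W - P) := by abel
  have hP : ‖P - W‖ = ‖W - P‖ := norm_sub_rev P W
  have hv : (β • A + (1 - β) • C - τ • g) - P = β • (A - P) + (1 - β) • (C - P) - τ • g := by
    module
  rw [hv, inner_sub_left, inner_add_left, real_inner_smul_left, real_inner_smul_left,
    real_inner_smul_left] at hVI
  have hyoung := two_mul_real_inner_le_div_add_mul (by linarith : 0 < (1 - β) / 2) (τ • g) (C - P)
  rw [real_inner_smul_left, norm_smul, mul_pow, Real.norm_eq_abs, sq_abs] at hyoung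
  have hdiv : τ ^ 2 * ‖g‖ ^ 2 / ((1 - β) / 2) = 2 * τ ^ 2 / (1 - β) * ‖g‖ ^ 2 := by
    field_simp
  rw [hA, hC, hP, norm_sub_sq_real (A - P), norm_sub_sq_real (C - P), inner_sub_right]
  linarith

theorem sum_two_mul_real_inner_le (τ : ℕ → ℝ) (F g x : ℕ → E) (w a : E) (K : ℕ) :
    ∑ k ∈ Finset.range K, 2 * τ k * ⟪F k, x k - w⟫
      ≤ ∑ k ∈ Finset.range K, 2 * τ k * ⟪g k, x k - w⟫
        + ∑ k ∈ Finset.range K, 2 * τ k * ⟪F k - g k, x k⟫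
        + ‖∑ k ∈ Finset.range K, τ k • (F k - g k)‖ ^ 2 + 2 * ‖w - a‖ ^ 2 + 2 * ‖a‖ ^ 2 := by
  have hsplit : ∑ k ∈ Finset.range K, 2 * τ k * ⟪F k, x k - w⟫
      = ∑ k ∈ Finset.range K, 2 * τ k * ⟪g k, x k - w⟫
        + ∑ k ∈ Finset.range K, 2 * τ k * ⟪F k - g k, x k⟫
        - 2 * ⟪∑ k ∈ Finset.range K, τ k • (F k - g k), w⟫ := by
    rw [sum_inner, Finset.mul_sum, ← Finset.sum_add_distrib, ← Finset.sum_sub_distrib]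
    refine Finset.sum_congr rfl fun k _ => ?_
    simp only [real_inner_smul_left, inner_sub_left, inner_sub_right]
    ring
  rw [hsplit]
  linarith [neg_two_mul_real_inner_le (∑ k ∈ Finset.range K, τ k • (F k - g k)) w a]

end InnerProductSpace

theorem sum_range_one_div_add_two_le_log (K : ℕ) :
    ∑ k ∈ Finset.range K, 1 / ((k : ℝ) + 2) ≤ Real.log ((K : ℝ) + 1) := by
  induction K with
  | zero => simp
  | succ K ih =>
    have hstep : 1 / ((K : ℝ) + 2) ≤ Real.log ((K : ℝ) + 2) - Real.log ((K : ℝ) + 1) := by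
      have h := Real.one_sub_inv_le_log_of_pos (x := ((K : ℝ) + 2) / ((K : ℝ) + 1)) (by positivity)
      rw [Real.log_div (by positivity) (by positivity), inv_div] at h
      convert h using 1
      field_simp
      ring
    rw [Finset.sum_range_succ, Nat.cast_succ, add_assoc, one_add_one_eq_two]
    linarith

section HalpernIteration

variable {E : Type*} [NormedAddCommGroup E] [InnerProductSpace ℝ E]
  {Z : Set E} {proj : E → E} {a : E} {β τ : ℕ → ℝ} {g z : ℕ → E}

theorem halpern_step_bound_s6 (hZ : Convex ℝ Z) (hprojZ : ∀ u, proj u ∈ Z)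
    (hproj : ∀ u, ∀ w ∈ Z, ‖proj u - u‖ ≤ ‖w - u‖) (k : ℕ) (hβ0 : 0 ≤ β k) (hβ1 : β k < 1)
    (hz : z (k + 1) = proj (β k • a + (1 - β k) • z k - τ k • g k)) {w : E} (hw : w ∈ Z) :
    2 * τ k * ⟪g k, z k - w⟫
      ≤ β k * ‖a - w‖ ^ 2 + (‖z k - w‖ ^ 2 - ‖z (k + 1) - w‖ ^ 2)
        + 2 * τ k ^ 2 / (1 - β k) * ‖g k‖ ^ 2
        - ((1 - β k) / 2 * ‖z (k + 1) - z k‖ ^ 2 + β k * ‖a - z (k + 1)‖ ^ 2) := by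
  have hVI : ⟪(β k • a + (1 - β k) • z k - τ k • g k) - z (k + 1), w - z (k + 1)⟫ ≤ 0 := by
    rw [hz]
    exact real_inner_sub_le_zero_of_norm_sub_le hZ (hprojZ _) (hproj _) hw
  have h := two_mul_real_inner_le_of_anchored_step hβ1 hVI
  rw [norm_sub_rev (z k) (z (k + 1))] at h
  linarith [mul_nonneg hβ0 (sq_nonneg ‖z k - w‖)]

theorem halpern_sum_bound (hZ : Convex ℝ Z) (hprojZ : ∀ u, proj u ∈ Z)
    (hproj : ∀ u, ∀ w ∈ Z, ‖proj u - u‖ ≤ ‖w - u‖) (hβ : ∀ k, 0 ≤ β k ∧ β k < 1)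
    (hz : ∀ k, z (k + 1) = proj (β k • a + (1 - β k) • z k - τ k • g k))
    {w : E} (hw : w ∈ Z) (K : ℕ) :
    ∑ k ∈ Finset.range K, 2 * τ k * ⟪g k, z k - w⟫
      ≤ (∑ k ∈ Finset.range K, β k) * ‖a - w‖ ^ 2 + ‖z 0 - w‖ ^ 2
        + ∑ k ∈ Finset.range K, 2 * τ k ^ 2 / (1 - β k) * ‖g k‖ ^ 2
        - ∑ k ∈ Finset.range K,
            ((1 - β k) / 2 * ‖z (k + 1) - z k‖ ^ 2 + β k * ‖a - z (k + 1)‖ ^ 2) := by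
  have hsum := Finset.sum_le_sum fun k (_ : k ∈ Finset.range K) =>
    halpern_step_bound_s6 hZ hprojZ hproj k (hβ k).1 (hβ k).2 (hz k) hw
  rw [Finset.sum_sub_distrib, Finset.sum_add_distrib, Finset.sum_add_distrib, ← Finset.sum_mul,
    Finset.sum_range_sub' (fun k => ‖z k - w‖ ^ 2)] at hsum
  linarith [sq_nonneg ‖z K - w‖]

end HalpernIteration

theorem convex_setOf_forall_py_nonneg (d n : ℕ) :
    Convex ℝ {w : PD d n | ∀ i, 0 ≤ py w i} := by
  intro a ha b hb s t hs ht _ i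
  change 0 ≤ s * py a i + t * py b i
  exact add_nonneg (mul_nonneg hs (ha i)) (mul_nonneg ht (hb i))

theorem gda_halpern_pathwise_bound_general
    {d n : ℕ} {Ω : Type*}
    (x₀ : EuclideanSpace ℝ (Fin d)) (y₀ : EuclideanSpace ℝ (Fin n))
    -- the stochastic oracle for the Lagrangian and its mean
    (Ft : PD d n → Ω → PD d n)
    (F : PD d n → PD d n)
    -- metric projection onto `Z = ℝ^d × ℝⁿ₊`
    (proj : PD d n → PD d n)
    (hprojZ : ∀ u, ∀ i, 0 ≤ py (proj u) i)
    (hproj : ∀ u, ∀ w : PD d n, (∀ i, 0 ≤ py w i) → ‖proj u - u‖ ≤ ‖w - u‖)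
    -- parameters: `β_k = 1/(k+2)`, arbitrary positive step sizes
    (β τ : ℕ → ℝ) (hβ : ∀ k, β k = 1 / ((k : ℝ) + 2))
    -- an arbitrary realization of the samples, and the iterates along it
    (ωs : ℕ → Ω)
    (z : ℕ → PD d n) (hz0 : z 0 = pmk x₀ y₀)
    (hzrec : ∀ k, z (k + 1)
      = proj (β k • pmk x₀ y₀ + (1 - β k) • z k - τ k • Ft (z k) (ωs k))) :
    ∀ zz : PD d n, (∀ i, 0 ≤ py zz i) → ∀ K : ℕ, 0 < K →
      ∑ k ∈ Finset.range K, 2 * τ k * ⟪F (z k), z k - zz⟫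
          - (3 + Real.log ((K : ℝ) + 1)) * ‖zz - pmk x₀ y₀‖ ^ 2
        ≤ (∑ k ∈ Finset.range K,
              ((2 * τ k ^ 2 / (1 - β k)) * ‖Ft (z k) (ωs k)‖ ^ 2
                + 2 * τ k * ⟪F (z k) - Ft (z k) (ωs k), z k⟫))
          + ‖∑ k ∈ Finset.range K, τ k • (F (z k) - Ft (z k) (ωs k))‖ ^ 2
          + 2 * ‖pmk x₀ y₀‖ ^ 2
          - ∑ k ∈ Finset.range K,
              (((1 - β k) / 2) * ‖z (k + 1) - z k‖ ^ 2
                + β k * ‖pmk x₀ y₀ - z (k + 1)‖ ^ 2) := by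
  intro zz hzz K _
  have hβ01 : ∀ k, 0 ≤ β k ∧ β k < 1 := fun k => by
    rw [hβ k, div_lt_one (by positivity)]
    exact ⟨by positivity, by linarith [k.cast_nonneg (α := ℝ)]⟩
  have hsum := halpern_sum_bound (convex_setOf_forall_py_nonneg d n) hprojZ hproj hβ01 hzrec hzz K
  have hnoise := sum_two_mul_real_inner_le τ (fun k => F (z k)) (fun k => Ft (z k) (ωs k)) z zz
    (pmk x₀ y₀) K
  have hlog : (∑ k ∈ Finset.range K, β k) * ‖zz - pmk x₀ y₀‖ ^ 2
      ≤ Real.log ((K : ℝ) + 1) * ‖zz - pmk x₀ y₀‖ ^ 2 := by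
    gcongr
    simpa only [hβ] using sum_range_one_div_add_two_le_log K
  rw [hz0, norm_sub_rev (pmk x₀ y₀) zz] at hsum
  rw [Finset.sum_add_distrib]
  linarith

/-- Pathwise regret-type inequality (Lemma on variable parameters) for the
stochastic gradient descent–ascent iteration with Halpern anchoring applied to
the Lagrangian of a convex program, under the Blum–Gladyshev oracle model. -/
theorem gda_halpern_pathwise_bound
    {d n : ℕ} {Ω : Type*} [MeasurableSpace Ω] (μ : Measure Ω) [IsProbabilityMeasure μ]
    (f : EuclideanSpace ℝ (Fin d) → ℝ) (hf : ConvexOn ℝ Set.univ f)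
    (gc : Fin n → EuclideanSpace ℝ (Fin d) → ℝ) (hgc : ∀ i, ConvexOn ℝ Set.univ (gc i))
    (x₀ : EuclideanSpace ℝ (Fin d)) (y₀ : EuclideanSpace ℝ (Fin n)) (hy₀ : ∀ i, 0 ≤ y₀ i)
    (B G : ℝ) (hB : 0 < B) (hG : 0 < G)
    -- the stochastic oracle for the Lagrangian and its mean
    (Ft : PD d n → Ω → PD d n) (hFtmeas : Measurable (Function.uncurry Ft))
    (hFtL2 : ∀ z, MemLp (Ft z) 2 μ)
    (F : PD d n → PD d n) (hFdef : ∀ z, F z = ∫ ω, Ft z ω ∂μ)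
    (hform : ∀ z : PD d n, (∀ i, 0 ≤ py z i) →
      ∃ u : EuclideanSpace ℝ (Fin d), ∃ v : Fin n → EuclideanSpace ℝ (Fin d),
        IsSubgrad f (px z) u ∧ (∀ i, IsSubgrad (gc i) (px z) (v i)) ∧
        F z = pmk (u + ∑ i, py z i • v i)
          ((WithLp.equiv 2 (Fin n → ℝ)).symm fun i => -(gc i (px z))))
    (hBG : ∀ z : PD d n, (∀ i, 0 ≤ py z i) →
      ∫ ω, ‖Ft z ω‖ ^ 2 ∂μ ≤ B ^ 2 * ‖z - pmk x₀ y₀‖ ^ 2 + G ^ 2)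
    -- metric projection onto `Z = ℝ^d × ℝⁿ₊`
    (proj : PD d n → PD d n)
    (hprojZ : ∀ u, ∀ i, 0 ≤ py (proj u) i)
    (hproj : ∀ u, ∀ w : PD d n, (∀ i, 0 ≤ py w i) → ‖proj u - u‖ ≤ ‖w - u‖)
    -- parameters: `β_k = 1/(k+2)`, arbitrary positive step sizes
    (β τ : ℕ → ℝ) (hβ : ∀ k, β k = 1 / ((k : ℝ) + 2)) (hτ : ∀ k, 0 < τ k)
    -- an arbitrary realization of the samples, and the iterates along it
    (ωs : ℕ → Ω)
    (z : ℕ → PD d n) (hz0 : z 0 = pmk x₀ y₀)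
    (hzrec : ∀ k, z (k + 1)
      = proj (β k • pmk x₀ y₀ + (1 - β k) • z k - τ k • Ft (z k) (ωs k))) :
    ∀ zz : PD d n, (∀ i, 0 ≤ py zz i) → ∀ K : ℕ, 0 < K →
      ∑ k ∈ Finset.range K, 2 * τ k * ⟪F (z k), z k - zz⟫
          - (3 + Real.log ((K : ℝ) + 1)) * ‖zz - pmk x₀ y₀‖ ^ 2
        ≤ (∑ k ∈ Finset.range K,
              ((2 * τ k ^ 2 / (1 - β k)) * ‖Ft (z k) (ωs k)‖ ^ 2
                + 2 * τ k * ⟪F (z k) - Ft (z k) (ωs k), z k⟫))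
          + ‖∑ k ∈ Finset.range K, τ k • (F (z k) - Ft (z k) (ωs k))‖ ^ 2
          + 2 * ‖pmk x₀ y₀‖ ^ 2
          - ∑ k ∈ Finset.range K,
              (((1 - β k) / 2) * ‖z (k + 1) - z k‖ ^ 2
                + β k * ‖pmk x₀ y₀ - z (k + 1)‖ ^ 2) :=
  gda_halpern_pathwise_bound_general x₀ y₀ Ft F proj hprojZ hproj β τ hβ ωs z hz0 hzrec
end
end

section
/- Let f, g₁, …, g_n : ℝ^d → ℝ be convex and let (x*, y*) ∈ ℝ^d × ℝⁿ₊ be a saddle point of the Lagrangian L(x,y) = f(x) + Σᵢ yᵢ gᵢ(x) over ℝ^d × ℝⁿ₊. Let z_k = (x_k, y_k) ∈ ℝ^d × ℝⁿ₊, k = 0, …, K−1, be any points, let τ_0, …, τ_{K−1} > 0, and let F(z_k) = (u_k + Σᵢ y_{k,i} v_{k,i}, −(g₁(x_k), …, g_n(x_k))) where u_k ∈ ∂f(x_k) and v_{k,i} ∈ ∂gᵢ(x_k). Suppose there are constants c_K, d_K > 0 such that for all z = (x, y) ∈ ℝ^d × ℝⁿ₊: (Σ_{i=0}^{K−1} τ_i)^{-1}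 · Σ_{k=0}^{K−1} τ_k·⟨F(z_k), z_k − z⟩ − c_K‖z − z₀‖² ≤ d_K, where z₀ = (x₀, y₀) ∈ ℝ^d × ℝⁿ₊ is fixed. Then, with x_K^out = (Σ_{i=0}^{K−1} τ_i)^{-1} Σ_{i=0}^{K−1} τ_i x_i and 𝟙 ∈ ℝⁿ the all-ones vector: (i) |f(x_K^out) − f(x*)| ≤ c_K·(‖x* − x₀‖² + 2(‖y* − y₀‖² + ‖y*‖²) + ‖y₀‖²) + d_K, and (ii) Σ_{i=1}^{n} max(0, gᵢ(x_K^out)) ≤ c_K·(‖x* − x₀‖² + ‖y* + 𝟙 − y₀‖² + ‖y₀‖²) + d_K. -/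
/-!
Evaluating the regret bound at `z = (x*, y)` gives, for every `y ≥ 0`, the gap estimate
`L(x_out, y) - f(x*) ≤ c_K (‖x* - x₀‖² + ‖y - y₀‖²) + d_K`: the subgradient inequalities bound
`L(x_k, y) - L(x*, y_k)` by `⟪F(z_k), z_k - z⟫`, Jensen's inequality moves the average inside
`L(·, y)`, and `L(x*, y_k) ≤ f(x*)` because `x*` is feasible. Since `f(x*) ≤ L(x_out, y*)` by the
saddle property, testing the gap estimate with `y = 0` and `y = 2y*` bounds `f(x_out) - f(x*)` from
both sides, and testing it with `y* + 𝟙_{g(x_out) > 0}` bounds the infeasibility.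
-/

open scoped RealInnerProductSpace

noncomputable section

open Finset

theorem ConvexOn.finset_sum_apply {𝕜 E β ι : Type*} [Semiring 𝕜] [PartialOrder 𝕜]
    [AddCommMonoid E] [AddCommMonoid β] [PartialOrder β] [IsOrderedAddMonoid β] [SMul 𝕜 E]
    [Module 𝕜 β] {s : Set E} (hs : Convex 𝕜 s) (t : Finset ι) {f : ι → E → β}
    (hf : ∀ i ∈ t, ConvexOn 𝕜 s (f i)) : ConvexOn 𝕜 s fun x => ∑ i ∈ t, f i x := by
  simpa only [← Finset.sum_apply] using
    Finset.sum_induction f (ConvexOn 𝕜 s) (fun _ _ => ConvexOn.add)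
      (by exact convexOn_const (0 : β) hs) hf

section Lagrangian

variable {E ι : Type*} [Fintype ι]

def lagrangian (f : E → ℝ) (g : ι → E → ℝ) (x : E) (y : EuclideanSpace ℝ ι) : ℝ :=
  f x + ∑ i, y i * g i x

theorem lagrangian_add (f : E → ℝ) (g : ι → E → ℝ) (x : E) (y y' : EuclideanSpace ℝ ι) :
    lagrangian f g x (y + y') = lagrangian f g x y + ∑ i, y' i * g i x := by
  simp only [lagrangian, PiLp.add_apply, add_mul, sum_add_distrib, add_assoc]

variable {f : E → ℝ} {g : ι → E → ℝ} {x : E} {y : EuclideanSpace ℝ ι}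

theorem lagrangian_le_of_nonpos (hg : ∀ i, g i x ≤ 0) (hy : ∀ i, 0 ≤ y i) :
    lagrangian f g x y ≤ f x :=
  add_le_of_nonpos_right <| sum_nonpos fun i _ => mul_nonpos_of_nonneg_of_nonpos (hy i) (hg i)

theorem nonpos_of_forall_lagrangian_le (hy : ∀ i, 0 ≤ y i)
    (hmax : ∀ y' : EuclideanSpace ℝ ι, (∀ i, 0 ≤ y' i) → lagrangian f g x y' ≤ lagrangian f g x y)
    (i : ι) : g i x ≤ 0 := by
  classical
  have h := hmax (y + EuclideanSpace.single i 1) fun j => by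
    have := hy j
    simp only [PiLp.add_apply, PiLp.single_apply]
    split_ifs <;> linarith
  simpa [lagrangian_add, PiLp.single_apply] using h

theorem convexOn_lagrangian [AddCommMonoid E] [Module ℝ E] (hf : ConvexOn ℝ Set.univ f)
    (hg : ∀ i, ConvexOn ℝ Set.univ (g i)) (hy : ∀ i, 0 ≤ y i) :
    ConvexOn ℝ Set.univ fun x => lagrangian f g x y :=
  hf.add <| ConvexOn.finset_sum_apply convex_univ _ fun i _ => (hg i).smul (hy i)

end Lagrangian

theorem IsSubgrad.sub_le_inner {d : ℕ} {f : EuclideanSpace ℝ (Fin d) → ℝ}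
    {x u : EuclideanSpace ℝ (Fin d)} (h : IsSubgrad f x u) (x' : EuclideanSpace ℝ (Fin d)) :
    f x - f x' ≤ ⟪u, x - x'⟫ := by
  have := h x'
  rw [← neg_sub, inner_neg_right] at this
  linarith

section PrimalDual

variable {d n : ℕ}

theorem pmk_sub_pmk (x x' : EuclideanSpace ℝ (Fin d)) (y y' : EuclideanSpace ℝ (Fin n)) :
    pmk x y - pmk x' y' = pmk (x - x') (y - y') := rfl

theorem norm_pmk_sq (x : EuclideanSpace ℝ (Fin d)) (y : EuclideanSpace ℝ (Fin n)) :
    ‖pmk x y‖ ^ 2 = ‖x‖ ^ 2 + ‖y‖ ^ 2 :=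
  WithLp.prod_norm_sq_eq_of_L2 _

theorem inner_pmk_pmk (x x' : EuclideanSpace ℝ (Fin d)) (y y' : EuclideanSpace ℝ (Fin n)) :
    ⟪pmk x y, pmk x' y'⟫ = ⟪x, x'⟫ + ⟪y, y'⟫ := rfl

/-- The operator `F(z) = (∂ₓL(x, y), -∇_y L(x, y))` of the paper, built from the subgradients
`u ∈ ∂f(x)` and `vᵢ ∈ ∂gᵢ(x)`. -/
def lagrangianOperator (u : EuclideanSpace ℝ (Fin d)) (v : Fin n → EuclideanSpace ℝ (Fin d))
    (g : Fin n → EuclideanSpace ℝ (Fin d) → ℝ) (x : EuclideanSpace ℝ (Fin d))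
    (y : EuclideanSpace ℝ (Fin n)) : PD d n :=
  pmk (u + ∑ i, y i • v i) ((WithLp.equiv 2 (Fin n → ℝ)).symm fun i => -(g i x))

variable {f : EuclideanSpace ℝ (Fin d) → ℝ} {g : Fin n → EuclideanSpace ℝ (Fin d) → ℝ}

theorem lagrangian_sub_lagrangian_le_inner {x u : EuclideanSpace ℝ (Fin d)}
    {v : Fin n → EuclideanSpace ℝ (Fin d)} {y : EuclideanSpace ℝ (Fin n)}
    (hu : IsSubgrad f x u) (hv : ∀ i, IsSubgrad (g i) x (v i)) (hy : ∀ i, 0 ≤ y i)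
    (x' : EuclideanSpace ℝ (Fin d)) (y' : EuclideanSpace ℝ (Fin n)) :
    lagrangian f g x y' - lagrangian f g x' y
      ≤ ⟪lagrangianOperator u v g x y, pmk x y - pmk x' y'⟫ :=
  have hdual : ⟪(WithLp.equiv 2 (Fin n → ℝ)).symm fun i => -(g i x), y - y'⟫
      = ∑ i, -g i x * (y i - y' i) := by
    simp [PiLp.inner_apply, mul_comm]
  calc lagrangian f g x y' - lagrangian f g x' y
      = (f x - f x') + ∑ i, (y' i * g i x - y i * g i x') := by
        simp only [lagrangian, sum_sub_distrib]
        ring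
    _ = (f x - f x') + ∑ i, (y i * (g i x - g i x') + -g i x * (y i - y' i)) := by
        congr 1
        exact sum_congr rfl fun i _ => by ring
    _ ≤ ⟪u, x - x'⟫ + ∑ i, (y i * ⟪v i, x - x'⟫ + -g i x * (y i - y' i)) := by
        gcongr with i
        · exact hu.sub_le_inner x'
        · exact hy i
        · exact (hv i).sub_le_inner x'
    _ = ⟪lagrangianOperator u v g x y, pmk x y - pmk x' y'⟫ := by
        rw [lagrangianOperator, pmk_sub_pmk, inner_pmk_pmk, inner_add_left, sum_inner, hdual,
          add_assoc, ← sum_add_distrib]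
        simp only [real_inner_smul_left]

theorem lagrangian_centerMass_sub_le {κ : Type*} [Fintype κ] (hf : ConvexOn ℝ Set.univ f)
    (hg : ∀ i, ConvexOn ℝ Set.univ (g i)) {xk : κ → EuclideanSpace ℝ (Fin d)}
    {yk : κ → EuclideanSpace ℝ (Fin n)} {τ : κ → ℝ} {u : κ → EuclideanSpace ℝ (Fin d)}
    {v : κ → Fin n → EuclideanSpace ℝ (Fin d)} (hτ : ∀ k, 0 ≤ τ k) (hT : 0 < ∑ k, τ k)
    (hu : ∀ k, IsSubgrad f (xk k) (u k)) (hv : ∀ k i, IsSubgrad (g i) (xk k) (v k i))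
    (hyk : ∀ k i, 0 ≤ yk k i) {x : EuclideanSpace ℝ (Fin d)} (hx : ∀ i, g i x ≤ 0)
    {y : EuclideanSpace ℝ (Fin n)} (hy : ∀ i, 0 ≤ y i) :
    lagrangian f g (univ.centerMass τ xk) y - f x
      ≤ (∑ k, τ k)⁻¹ *
          ∑ k, τ k *
            ⟪lagrangianOperator (u k) (v k) g (xk k) (yk k), pmk (xk k) (yk k) - pmk x y⟫ := by
  set T := ∑ k, τ k
  have hjensen :
      lagrangian f g (univ.centerMass τ xk) y ≤ T⁻¹ * ∑ k, τ k * lagrangian f g (xk k) y :=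
    (convexOn_lagrangian hf hg hy).map_centerMass_le (fun k _ => hτ k) hT fun k _ => Set.mem_univ _
  have hfeasible : T⁻¹ * ∑ k, τ k * lagrangian f g x (yk k) ≤ f x :=
    calc T⁻¹ * ∑ k, τ k * lagrangian f g x (yk k) ≤ T⁻¹ * ∑ k, τ k * f x := by
          gcongr with k
          exacts [hτ k, lagrangian_le_of_nonpos hx (hyk k)]
      _ = f x := by rw [← sum_mul, inv_mul_cancel_left₀ hT.ne']
  calc lagrangian f g (univ.centerMass τ xk) y - f x
      ≤ T⁻¹ * ∑ k, τ k * lagrangian f g (xk k) y - T⁻¹ * ∑ k, τ k * lagrangian f g x (yk k) :=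
        sub_le_sub hjensen hfeasible
    _ = T⁻¹ * ∑ k, τ k * (lagrangian f g (xk k) y - lagrangian f g x (yk k)) := by
        simp only [mul_sub, sum_sub_distrib]
    _ ≤ T⁻¹ * ∑ k, τ k * ⟪lagrangianOperator (u k) (v k) g (xk k) (yk k),
          pmk (xk k) (yk k) - pmk x y⟫ := by
        gcongr with k
        exacts [hτ k, lagrangian_sub_lagrangian_le_inner (hu k) (hv k) (hyk k) x y]

end PrimalDual

theorem sq_add_sub_le_sq_add_one_sub_add_sq {a b s : ℝ} (ha : 0 ≤ a) (hs₀ : 0 ≤ s) (hs₁ : s ≤ 1) :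
    (a + s - b) ^ 2 ≤ (a + 1 - b) ^ 2 + b ^ 2 := by
  -- the difference of the two sides is `(1 - s) (2a + 2s) + (b - 1 + s)²`
  nlinarith [mul_nonneg (sub_nonneg.2 hs₁) (add_nonneg ha hs₀), sq_nonneg (b - 1 + s)]

section Duality

variable {E ι : Type*} [Fintype ι] {f : E → ℝ} {g : ι → E → ℝ} {x : E}
  {ystar y₀ : EuclideanSpace ℝ ι} {p c r δ : ℝ}

theorem abs_sub_le_of_lagrangian_sub_le (hc : 0 ≤ c) (hystar : ∀ i, 0 ≤ ystar i)
    (hp : p ≤ lagrangian f g x ystar)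
    (hgap : ∀ y : EuclideanSpace ℝ ι, (∀ i, 0 ≤ y i) →
      lagrangian f g x y - p ≤ c * (r + ‖y - y₀‖ ^ 2) + δ) :
    |f x - p| ≤ c * (r + 2 * (‖ystar - y₀‖ ^ 2 + ‖ystar‖ ^ 2) + ‖y₀‖ ^ 2) + δ := by
  rw [abs_sub_le_iff]
  constructor
  · have hA : 0 ≤ c * (2 * (‖ystar - y₀‖ ^ 2 + ‖ystar‖ ^ 2)) := by positivity
    have h := hgap 0 fun _ => le_rfl
    simp only [lagrangian, PiLp.zero_apply, zero_mul, sum_const_zero, add_zero, zero_sub,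
      norm_neg] at h
    linarith
  · have h := hgap (ystar + ystar) fun i => add_nonneg (hystar i) (hystar i)
    have hnorm : ‖ystar + ystar - y₀‖ ^ 2 ≤ 2 * (‖ystar - y₀‖ ^ 2 + ‖ystar‖ ^ 2) := by
      rw [add_sub_right_comm]
      exact (pow_le_pow_left₀ (norm_nonneg _) (norm_add_le _ _) 2).trans add_sq_le
    rw [lagrangian_add] at h
    unfold lagrangian at h hp
    linarith [mul_le_mul_of_nonneg_left hnorm hc, mul_nonneg hc (sq_nonneg ‖y₀‖)]

theorem sum_max_zero_le_of_lagrangian_sub_le (hc : 0 ≤ c) (hystar : ∀ i, 0 ≤ ystar i)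
    (hp : p ≤ lagrangian f g x ystar)
    (hgap : ∀ y : EuclideanSpace ℝ ι, (∀ i, 0 ≤ y i) →
      lagrangian f g x y - p ≤ c * (r + ‖y - y₀‖ ^ 2) + δ) :
    ∑ i, max 0 (g i x)
      ≤ c * (r + ‖ystar + (WithLp.equiv 2 (ι → ℝ)).symm (fun _ => 1) - y₀‖ ^ 2 + ‖y₀‖ ^ 2) + δ := by
  classical
  set s : EuclideanSpace ℝ ι := (WithLp.equiv 2 (ι → ℝ)).symm fun i => if 0 < g i x then 1 else 0
  have hs : ∀ i, 0 ≤ s i ∧ s i ≤ 1 := fun i => by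
    simp only [s, WithLp.equiv_symm_apply, PiLp.toLp_apply]
    split_ifs <;> norm_num
  have hsg : ∑ i, s i * g i x = ∑ i, max 0 (g i x) := sum_congr rfl fun i _ => by
    simp only [s, WithLp.equiv_symm_apply, PiLp.toLp_apply]
    split_ifs with h
    · rw [one_mul, max_eq_right h.le]
    · rw [zero_mul, max_eq_left (not_lt.1 h)]
  have hnorm : ‖ystar + s - y₀‖ ^ 2
      ≤ ‖ystar + (WithLp.equiv 2 (ι → ℝ)).symm (fun _ => 1) - y₀‖ ^ 2 + ‖y₀‖ ^ 2 := by
    simp only [EuclideanSpace.norm_sq_eq, Real.norm_eq_abs, sq_abs, ← sum_add_distrib]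
    refine sum_le_sum fun i _ => ?_
    simpa using sq_add_sub_le_sq_add_one_sub_add_sq (b := y₀ i) (hystar i) (hs i).1 (hs i).2
  have h := hgap (ystar + s) fun i => add_nonneg (hystar i) (hs i).1
  rw [lagrangian_add, hsg] at h
  linarith [mul_le_mul_of_nonneg_left hnorm hc]

end Duality

theorem duality_objective_and_feasibility_bounds_general
    {d n K : ℕ} (hK : 0 < K)
    (f : EuclideanSpace ℝ (Fin d) → ℝ) (hf : ConvexOn ℝ Set.univ f)
    (gc : Fin n → EuclideanSpace ℝ (Fin d) → ℝ) (hgc : ∀ i, ConvexOn ℝ Set.univ (gc i))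
    -- a saddle point of the Lagrangian over `ℝ^d × ℝⁿ₊`
    (xstar : EuclideanSpace ℝ (Fin d)) (ystar : EuclideanSpace ℝ (Fin n))
    (hystar : ∀ i, 0 ≤ ystar i)
    (hsaddle : ∀ (xx : EuclideanSpace ℝ (Fin d)) (yy : EuclideanSpace ℝ (Fin n)),
      (∀ i, 0 ≤ yy i) →
        f xstar + ∑ i, yy i * gc i xstar ≤ f xstar + ∑ i, ystar i * gc i xstar
        ∧ f xstar + ∑ i, ystar i * gc i xstar ≤ f xx + ∑ i, ystar i * gc i xx)
    -- reference point
    (x₀ : EuclideanSpace ℝ (Fin d)) (y₀ : EuclideanSpace ℝ (Fin n))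
    -- arbitrary points, weights and subgradients
    (xk : Fin K → EuclideanSpace ℝ (Fin d)) (yk : Fin K → EuclideanSpace ℝ (Fin n))
    (hyk : ∀ k i, 0 ≤ yk k i)
    (τ : Fin K → ℝ) (hτ : ∀ k, 0 < τ k)
    (u : Fin K → EuclideanSpace ℝ (Fin d)) (hu : ∀ k, IsSubgrad f (xk k) (u k))
    (v : Fin K → Fin n → EuclideanSpace ℝ (Fin d))
    (hv : ∀ k i, IsSubgrad (gc i) (xk k) (v k i))
    -- the assumed regret-type bound over all of `Z`
    (cK dK : ℝ) (hcK : 0 < cK)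
    (hbound : ∀ (xx : EuclideanSpace ℝ (Fin d)) (yy : EuclideanSpace ℝ (Fin n)),
      (∀ i, 0 ≤ yy i) →
        (∑ i, τ i)⁻¹ *
            ∑ k, τ k *
              ⟪pmk (u k + ∑ i, yk k i • v k i)
                  ((WithLp.equiv 2 (Fin n → ℝ)).symm fun i => -(gc i (xk k))),
                pmk (xk k) (yk k) - pmk xx yy⟫
          - cK * ‖pmk xx yy - pmk x₀ y₀‖ ^ 2 ≤ dK) :
    ∀ xout : EuclideanSpace ℝ (Fin d),
      xout = (∑ i, τ i)⁻¹ • ∑ i, τ i • xk i →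
        |f xout - f xstar|
            ≤ cK * (‖xstar - x₀‖ ^ 2 + 2 * (‖ystar - y₀‖ ^ 2 + ‖ystar‖ ^ 2) + ‖y₀‖ ^ 2) + dK
          ∧ ∑ i : Fin n, max 0 (gc i xout)
            ≤ cK * (‖xstar - x₀‖ ^ 2
                  + ‖ystar + (WithLp.equiv 2 (Fin n → ℝ)).symm (fun _ => 1) - y₀‖ ^ 2
                  + ‖y₀‖ ^ 2) + dK := by
  rintro xout rfl
  have hT : 0 < ∑ k, τ k := sum_pos (fun k _ => hτ k) ⟨⟨0, hK⟩, mem_univ _⟩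
  have hfeasible : ∀ i, gc i xstar ≤ 0 :=
    nonpos_of_forall_lagrangian_le hystar fun y hy => (hsaddle xstar y hy).1
  have hgap : ∀ y : EuclideanSpace ℝ (Fin n), (∀ i, 0 ≤ y i) →
      lagrangian f gc (univ.centerMass τ xk) y - f xstar
        ≤ cK * (‖xstar - x₀‖ ^ 2 + ‖y - y₀‖ ^ 2) + dK := fun y hy => by
    have hregret := hbound xstar y hy
    rw [pmk_sub_pmk, norm_pmk_sq] at hregret
    exact (lagrangian_centerMass_sub_le hf hgc (fun k => (hτ k).le) hT hu hv hyk hfeasible hy).trans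
      (sub_le_iff_le_add'.1 hregret)
  have hp : f xstar ≤ lagrangian f gc (univ.centerMass τ xk) ystar := by
    have h := hsaddle (univ.centerMass τ xk) 0 fun _ => le_rfl
    simpa [lagrangian] using h.1.trans h.2
  exact ⟨abs_sub_le_of_lagrangian_sub_le hcK.le hystar hp hgap,
    sum_max_zero_le_of_lagrangian_sub_le hcK.le hystar hp hgap⟩

/-- Convex-duality lemma: a weighted regret bound against all of
`Z = ℝ^d × ℝⁿ₊` for the Lagrangian operator yields bounds on objective
suboptimality and on constraint infeasibility of the weighted primal average. -/
theorem duality_objective_and_feasibility_bounds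
    {d n K : ℕ} (hK : 0 < K)
    (f : EuclideanSpace ℝ (Fin d) → ℝ) (hf : ConvexOn ℝ Set.univ f)
    (gc : Fin n → EuclideanSpace ℝ (Fin d) → ℝ) (hgc : ∀ i, ConvexOn ℝ Set.univ (gc i))
    -- a saddle point of the Lagrangian over `ℝ^d × ℝⁿ₊`
    (xstar : EuclideanSpace ℝ (Fin d)) (ystar : EuclideanSpace ℝ (Fin n))
    (hystar : ∀ i, 0 ≤ ystar i)
    (hsaddle : ∀ (xx : EuclideanSpace ℝ (Fin d)) (yy : EuclideanSpace ℝ (Fin n)),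
      (∀ i, 0 ≤ yy i) →
        f xstar + ∑ i, yy i * gc i xstar ≤ f xstar + ∑ i, ystar i * gc i xstar
        ∧ f xstar + ∑ i, ystar i * gc i xstar ≤ f xx + ∑ i, ystar i * gc i xx)
    -- reference point
    (x₀ : EuclideanSpace ℝ (Fin d)) (y₀ : EuclideanSpace ℝ (Fin n)) (hy₀ : ∀ i, 0 ≤ y₀ i)
    -- arbitrary points, weights and subgradients
    (xk : Fin K → EuclideanSpace ℝ (Fin d)) (yk : Fin K → EuclideanSpace ℝ (Fin n))
    (hyk : ∀ k i, 0 ≤ yk k i)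
    (τ : Fin K → ℝ) (hτ : ∀ k, 0 < τ k)
    (u : Fin K → EuclideanSpace ℝ (Fin d)) (hu : ∀ k, IsSubgrad f (xk k) (u k))
    (v : Fin K → Fin n → EuclideanSpace ℝ (Fin d))
    (hv : ∀ k i, IsSubgrad (gc i) (xk k) (v k i))
    -- the assumed regret-type bound over all of `Z`
    (cK dK : ℝ) (hcK : 0 < cK) (hdK : 0 < dK)
    (hbound : ∀ (xx : EuclideanSpace ℝ (Fin d)) (yy : EuclideanSpace ℝ (Fin n)),
      (∀ i, 0 ≤ yy i) →
        (∑ i, τ i)⁻¹ *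
            ∑ k, τ k *
              ⟪pmk (u k + ∑ i, yk k i • v k i)
                  ((WithLp.equiv 2 (Fin n → ℝ)).symm fun i => -(gc i (xk k))),
                pmk (xk k) (yk k) - pmk xx yy⟫
          - cK * ‖pmk xx yy - pmk x₀ y₀‖ ^ 2 ≤ dK) :
    ∀ xout : EuclideanSpace ℝ (Fin d),
      xout = (∑ i, τ i)⁻¹ • ∑ i, τ i • xk i →
        |f xout - f xstar|
            ≤ cK * (‖xstar - x₀‖ ^ 2 + 2 * (‖ystar - y₀‖ ^ 2 + ‖ystar‖ ^ 2) + ‖y₀‖ ^ 2) + dK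
          ∧ ∑ i : Fin n, max 0 (gc i xout)
            ≤ cK * (‖xstar - x₀‖ ^ 2
                  + ‖ystar + (WithLp.equiv 2 (Fin n → ℝ)).symm (fun _ => 1) - y₀‖ ^ 2
                  + ‖y₀‖ ^ 2) + dK :=
  duality_objective_and_feasibility_bounds_general hK f hf gc hgc xstar ystar hystar hsaddle x₀ y₀
    xk yk hyk τ hτ u hu v hv cK dK hcK hbound
end
end

section
/- Under the stochastic oracle model of the min-max residual setting (oracle unbiased, with BG-type variance bound with constants B, G relative to the anchor z₀, and mean-square L-Lipschitz), consider the STORM estimator update g_{k+1} = F̃(z_{k+1}, ξ_{k+1}) + (1 − α_k)(g_k − F̃(z_k, ξ_{k+1})), where α_k ∈ (0, 1] and ξ_{k+1} is a fresh sample with law ν independent of (z_k, z_{k+1}, g_k). Then for every k ≥ 0: (α_k/2)·E‖g_k − F(z_k)‖² ≤ (1 − α_k/2)·E‖g_k − F(z_k)‖² − E‖g_{k+1} − F(z_{k+1})‖² + 2L²·E‖z_{k+1} − z_k‖² + 2α_k²·(B²·E‖z_k − z₀‖² + G²). -/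
open MeasureTheory
open scoped RealInnerProductSpace

/-!
Conditionally on the past, write `g_{k+1} - F(z_{k+1}) = (1 - α)(g_k - F(z_k)) + D`, where
`D = (F̃(z_{k+1}, ξ) - F̃(z_k, ξ) - (F(z_{k+1}) - F(z_k))) + α (F̃(z_k, ξ) - F(z_k))` has mean zero
in the fresh sample `ξ`. The cross term therefore vanishes, and `E‖D‖²` is at most twice the
variance of the oracle increment (bounded by `L²‖z_{k+1} - z_k‖²` through mean-square
Lipschitzness) plus `2α²` times the oracle variance (bounded by the BG condition).
Since `(1 - α)² ≤ 1 - α`, integrating over the past gives the recursion.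
-/

theorem LipschitzWith.comp_memLp_of_isFiniteMeasure {α E F : Type*} [MeasurableSpace α]
    {μ : Measure α} [IsFiniteMeasure μ] [NormedAddCommGroup E] [NormedAddCommGroup F]
    {p : ENNReal} {K : NNReal} {g : E → F} {f : α → E} (hg : LipschitzWith K g)
    (hf : MemLp f p μ) : MemLp (g ∘ f) p μ := by
  have hg' : LipschitzWith K fun x => g x - g 0 := by
    simpa using hg.sub (LipschitzWith.const (g 0))
  convert (hg'.comp_memLp (sub_self _) hf).add (memLp_const (g 0)) using 1
  ext x
  simp

theorem integral_prod_le_of_forall_integral_le {W Ξ : Type*} [MeasurableSpace W]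
    [MeasurableSpace Ξ] {P : Measure W} [SFinite P] {ν : Measure Ξ} {f : W × Ξ → ℝ}
    (hf : 0 ≤ f) (hf_slice : ∀ w, Integrable (fun ξ => f (w, ξ)) ν) {φ : W → ℝ}
    (hφ : Integrable φ P) (hle : ∀ w, ∫ ξ, f (w, ξ) ∂ν ≤ φ w) :
    ∫ p, f p ∂(P.prod ν) ≤ ∫ w, φ w ∂P := by
  have hφ0 : 0 ≤ φ := fun w => (integral_nonneg fun ξ => hf (w, ξ)).trans (hle w)
  by_cases hfi : Integrable f (P.prod ν)
  · rw [← ENNReal.ofReal_le_ofReal_iff (integral_nonneg hφ0),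
      ofReal_integral_eq_lintegral_ofReal hfi (.of_forall hf),
      ofReal_integral_eq_lintegral_ofReal hφ (.of_forall hφ0)]
    refine (lintegral_prod_le _).trans (lintegral_mono fun w => ?_)
    rw [← ofReal_integral_eq_lintegral_ofReal (hf_slice w) (.of_forall fun ξ => hf (w, ξ))]
    exact ENNReal.ofReal_le_ofReal (hle w)
  · rw [integral_undef hfi]
    exact integral_nonneg hφ0

section SecondMoment

variable {Ω E : Type*} [MeasurableSpace Ω] {μ : Measure Ω} [NormedAddCommGroup E]

theorem integral_norm_add_sq_le {Y Z : Ω → E} (hY : MemLp Y 2 μ) (hZ : MemLp Z 2 μ) :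
    ∫ ω, ‖Y ω + Z ω‖ ^ 2 ∂μ ≤ 2 * ∫ ω, ‖Y ω‖ ^ 2 ∂μ + 2 * ∫ ω, ‖Z ω‖ ^ 2 ∂μ := by
  have hY2 := hY.norm.integrable_sq
  have hZ2 := hZ.norm.integrable_sq
  rw [← integral_const_mul, ← integral_const_mul, ← integral_add (hY2.const_mul 2)
    (hZ2.const_mul 2)]
  refine integral_mono (hY.add hZ).norm.integrable_sq
    ((hY2.const_mul 2).add (hZ2.const_mul 2)) fun ω => ?_
  nlinarith [norm_add_le (Y ω) (Z ω), norm_nonneg (Y ω + Z ω), sq_nonneg (‖Y ω‖ - ‖Z ω‖)]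

variable [InnerProductSpace ℝ E] [CompleteSpace E] [IsProbabilityMeasure μ]

theorem integral_norm_add_sub_integral_sq {X : Ω → E} (hX : MemLp X 2 μ) (a : E) :
    ∫ ω, ‖a + (X ω - ∫ η, X η ∂μ)‖ ^ 2 ∂μ
      = ‖a‖ ^ 2 + ∫ ω, ‖X ω - ∫ η, X η ∂μ‖ ^ 2 ∂μ := by
  set D := fun ω => X ω - ∫ η, X η ∂μ
  have hD : MemLp D 2 μ := hX.sub (memLp_const _)
  have hDi : Integrable D μ := hD.integrable one_le_two
  have hD0 : ∫ ω, D ω ∂μ = 0 := by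
    simp [D, integral_sub (hX.integrable one_le_two) (integrable_const _)]
  have hinner : Integrable (fun ω => 2 * ⟪a, D ω⟫) μ := (hDi.const_inner a).const_mul 2
  change ∫ ω, ‖a + D ω‖ ^ 2 ∂μ = ‖a‖ ^ 2 + ∫ ω, ‖D ω‖ ^ 2 ∂μ
  simp_rw [norm_add_sq_real a]
  rw [integral_add ((integrable_const _).fun_add hinner) hD.norm.integrable_sq,
    integral_add (integrable_const _) hinner, integral_const_mul, integral_inner hDi, hD0]
  simp

theorem integral_norm_sq_eq {X : Ω → E} (hX : MemLp X 2 μ) :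
    ∫ ω, ‖X ω‖ ^ 2 ∂μ = ‖∫ ω, X ω ∂μ‖ ^ 2 + ∫ ω, ‖X ω - ∫ η, X η ∂μ‖ ^ 2 ∂μ := by
  simpa using integral_norm_add_sub_integral_sq hX (∫ ω, X ω ∂μ)

end SecondMoment

section Oracle

variable {E Ξ : Type*} [NormedAddCommGroup E] [InnerProductSpace ℝ E] [CompleteSpace E]
  [MeasurableSpace Ξ] {ν : Measure Ξ} [IsProbabilityMeasure ν] {F : E → E} {Ft : E → Ξ → E}
  {L : ℝ}

theorem norm_sub_sq_add_integral_norm_sub_sq_le (hFtL2 : ∀ z, MemLp (Ft z) 2 ν)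
    (hmean : ∀ z, ∫ ξ, Ft z ξ ∂ν = F z)
    (hmslip : ∀ u v, ∫ ξ, ‖Ft u ξ - Ft v ξ‖ ^ 2 ∂ν ≤ L ^ 2 * ‖u - v‖ ^ 2) (u v : E) :
    ‖F u - F v‖ ^ 2 + ∫ ξ, ‖Ft u ξ - Ft v ξ - (F u - F v)‖ ^ 2 ∂ν ≤ L ^ 2 * ‖u - v‖ ^ 2 := by
  have hmean_sub : ∫ ξ, (Ft u ξ - Ft v ξ) ∂ν = F u - F v := by
    rw [integral_sub ((hFtL2 u).integrable one_le_two) ((hFtL2 v).integrable one_le_two),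
      hmean, hmean]
  have := integral_norm_sq_eq ((hFtL2 u).sub (hFtL2 v))
  simp only [Pi.sub_apply, hmean_sub] at this
  linarith [hmslip u v]

theorem lipschitzWith_of_meanSq_lipschitz (hFtL2 : ∀ z, MemLp (Ft z) 2 ν)
    (hmean : ∀ z, ∫ ξ, Ft z ξ ∂ν = F z)
    (hmslip : ∀ u v, ∫ ξ, ‖Ft u ξ - Ft v ξ‖ ^ 2 ∂ν ≤ L ^ 2 * ‖u - v‖ ^ 2) :
    LipschitzWith ‖L‖₊ F := by
  refine LipschitzWith.of_dist_le_mul fun u v => ?_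
  have h := norm_sub_sq_add_integral_norm_sub_sq_le hFtL2 hmean hmslip u v
  have hvar : 0 ≤ ∫ ξ, ‖Ft u ξ - Ft v ξ - (F u - F v)‖ ^ 2 ∂ν :=
    integral_nonneg fun ξ => sq_nonneg _
  rw [dist_eq_norm, dist_eq_norm, coe_nnnorm, Real.norm_eq_abs]
  refine (pow_le_pow_iff_left₀ (norm_nonneg _) (by positivity) two_ne_zero).mp ?_
  rw [mul_pow, sq_abs]
  linarith

/-- One STORM step, conditionally on the past `(z_k, z_{k+1}, g_k) = (v, u, g)`. -/
theorem integral_norm_storm_sub_sq_le (hFtL2 : ∀ z, MemLp (Ft z) 2 ν)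
    (hmean : ∀ z, ∫ ξ, Ft z ξ ∂ν = F z)
    (hmslip : ∀ u v, ∫ ξ, ‖Ft u ξ - Ft v ξ‖ ^ 2 ∂ν ≤ L ^ 2 * ‖u - v‖ ^ 2)
    {α : ℝ} (hα : α ∈ Set.Icc (0 : ℝ) 1) (u v g : E) :
    ∫ ξ, ‖Ft u ξ + (1 - α) • (g - Ft v ξ) - F u‖ ^ 2 ∂ν
      ≤ (1 - α) * ‖g - F v‖ ^ 2 + 2 * L ^ 2 * ‖u - v‖ ^ 2
        + 2 * α ^ 2 * ∫ ξ, ‖Ft v ξ - F v‖ ^ 2 ∂ν := by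
  obtain ⟨hα0, hα1⟩ := hα
  set X := fun ξ => Ft u ξ - (1 - α) • Ft v ξ
  have hX : MemLp X 2 ν := (hFtL2 u).sub ((hFtL2 v).const_smul _)
  have hmeanX : ∫ ξ, X ξ ∂ν = F u - (1 - α) • F v := by
    rw [integral_sub ((hFtL2 u).integrable one_le_two)
      (((hFtL2 v).integrable one_le_two).fun_smul _), integral_smul, hmean, hmean]
  have hsplit : ∀ ξ, Ft u ξ + (1 - α) • (g - Ft v ξ) - F u
      = (1 - α) • (g - F v) + (X ξ - ∫ η, X η ∂ν) := fun ξ => by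
    rw [hmeanX]; simp only [X]; module
  have hD : ∀ ξ, X ξ - ∫ η, X η ∂ν
      = (Ft u ξ - Ft v ξ - (F u - F v)) + α • (Ft v ξ - F v) := fun ξ => by
    rw [hmeanX]; simp only [X]; module
  have hincr : MemLp (fun ξ => Ft u ξ - Ft v ξ - (F u - F v)) 2 ν :=
    ((hFtL2 u).sub (hFtL2 v)).sub (memLp_const _)
  have hnoise : MemLp (fun ξ => Ft v ξ - F v) 2 ν := (hFtL2 v).sub (memLp_const _)
  have hfluct := integral_norm_add_sq_le (Z := fun ξ => α • (Ft v ξ - F v)) hincr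
    (hnoise.const_smul α)
  simp only [norm_smul, mul_pow, Real.norm_eq_abs, sq_abs, integral_const_mul] at hfluct
  have hincr_le := norm_sub_sq_add_integral_norm_sub_sq_le hFtL2 hmean hmslip u v
  have hcontract : (1 - α) ^ 2 * ‖g - F v‖ ^ 2 ≤ (1 - α) * ‖g - F v‖ ^ 2 :=
    mul_le_mul_of_nonneg_right (by nlinarith) (sq_nonneg _)
  simp_rw [hsplit, integral_norm_add_sub_integral_sq hX, hD, norm_smul, mul_pow,
    Real.norm_eq_abs, sq_abs]
  linarith [sq_nonneg ‖F u - F v‖]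

end Oracle

theorem storm_one_step_general
    {m : ℕ} {W Ξ : Type*} [MeasurableSpace W] [MeasurableSpace Ξ]
    (P : Measure W) [IsProbabilityMeasure P]
    (ν : Measure Ξ) [IsProbabilityMeasure ν]
    (z₀ : EuclideanSpace ℝ (Fin m))
    (F : EuclideanSpace ℝ (Fin m) → EuclideanSpace ℝ (Fin m))
    (B G L : ℝ)
    -- the stochastic oracle: unbiased, (BG)-type variance, mean-square Lipschitz
    (Ft : EuclideanSpace ℝ (Fin m) → Ξ → EuclideanSpace ℝ (Fin m))
    (hFtL2 : ∀ z, MemLp (Ft z) 2 ν)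
    (hmean : ∀ z, ∫ ξ, Ft z ξ ∂ν = F z)
    (hvar : ∀ z, ∫ ξ, ‖Ft z ξ - F z‖ ^ 2 ∂ν ≤ B ^ 2 * ‖z - z₀‖ ^ 2 + G ^ 2)
    (hmslip : ∀ u v, ∫ ξ, ‖Ft u ξ - Ft v ξ‖ ^ 2 ∂ν ≤ L ^ 2 * ‖u - v‖ ^ 2)
    -- the random vectors measurable with respect to the past
    (zk zk1 gk : W → EuclideanSpace ℝ (Fin m))
    (hzkL2 : MemLp zk 2 P) (hzk1L2 : MemLp zk1 2 P) (hgkL2 : MemLp gk 2 P)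
    (α : ℝ) (hα : α ∈ Set.Ioc (0 : ℝ) 1)
    -- the STORM update, on the product of the past with the fresh sample
    (gk1 : W × Ξ → EuclideanSpace ℝ (Fin m))
    (hgk1 : ∀ p : W × Ξ, gk1 p = Ft (zk1 p.1) p.2 + (1 - α) • (gk p.1 - Ft (zk p.1) p.2)) :
    (α / 2) * ∫ w, ‖gk w - F (zk w)‖ ^ 2 ∂P
      ≤ (1 - α / 2) * (∫ w, ‖gk w - F (zk w)‖ ^ 2 ∂P)
        - (∫ p, ‖gk1 p - F (zk1 p.1)‖ ^ 2 ∂(P.prod ν))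
        + 2 * L ^ 2 * (∫ w, ‖zk1 w - zk w‖ ^ 2 ∂P)
        + 2 * α ^ 2 * (B ^ 2 * (∫ w, ‖zk w - z₀‖ ^ 2 ∂P) + G ^ 2) := by
  obtain rfl : gk1 = _ := funext hgk1
  have hFlip := lipschitzWith_of_meanSq_lipschitz hFtL2 hmean hmslip
  have hA : Integrable (fun w => ‖gk w - F (zk w)‖ ^ 2) P :=
    (hgkL2.sub (hFlip.comp_memLp_of_isFiniteMeasure hzkL2)).norm.integrable_sq
  have hZ : Integrable (fun w => ‖zk1 w - zk w‖ ^ 2) P := (hzk1L2.sub hzkL2).norm.integrable_sq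
  have hC : Integrable (fun w => ‖zk w - z₀‖ ^ 2) P :=
    (hzkL2.sub (memLp_const z₀)).norm.integrable_sq
  have hφ : Integrable (fun w => (1 - α) * ‖gk w - F (zk w)‖ ^ 2
      + 2 * L ^ 2 * ‖zk1 w - zk w‖ ^ 2 + 2 * α ^ 2 * (B ^ 2 * ‖zk w - z₀‖ ^ 2 + G ^ 2)) P :=
    ((hA.const_mul _).fun_add (hZ.const_mul _)).fun_add
      (((hC.const_mul _).fun_add (integrable_const _)).const_mul _)
  have hslice : ∀ w, Integrable (fun ξ => ‖Ft (zk1 w) ξ + (1 - α) • (gk w - Ft (zk w) ξ)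
      - F (zk1 w)‖ ^ 2) ν := fun w =>
    (((hFtL2 (zk1 w)).add (((memLp_const (gk w)).sub (hFtL2 (zk w))).const_smul (1 - α))).sub
      (memLp_const (F (zk1 w)))).norm.integrable_sq
  have hcond : ∀ w, ∫ ξ, ‖Ft (zk1 w) ξ + (1 - α) • (gk w - Ft (zk w) ξ) - F (zk1 w)‖ ^ 2 ∂ν
      ≤ (1 - α) * ‖gk w - F (zk w)‖ ^ 2
      + 2 * L ^ 2 * ‖zk1 w - zk w‖ ^ 2 + 2 * α ^ 2 * (B ^ 2 * ‖zk w - z₀‖ ^ 2 + G ^ 2) :=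
    fun w => (integral_norm_storm_sub_sq_le hFtL2 hmean hmslip (Set.Ioc_subset_Icc_self hα)
      _ _ _).trans (by gcongr; exact hvar _)
  have hstep := integral_prod_le_of_forall_integral_le (P := P) (fun p => sq_nonneg
    ‖Ft (zk1 p.1) p.2 + (1 - α) • (gk p.1 - Ft (zk p.1) p.2) - F (zk1 p.1)‖) hslice hφ hcond
  rw [integral_add ((hA.const_mul _).fun_add (hZ.const_mul _))
      (((hC.const_mul _).fun_add (integrable_const _)).const_mul _),
    integral_add (hA.const_mul _) (hZ.const_mul _), integral_const_mul, integral_const_mul,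
    integral_const_mul, integral_add (hC.const_mul _) (integrable_const _), integral_const_mul,
    integral_const, probReal_univ, one_smul] at hstep
  linarith

/-- One-step recursion for the STORM variance-reduced estimator under the
Blum–Gladyshev-type variance bound and mean-square Lipschitzness of the
oracle: the fresh sample `ξ_{k+1}` is modeled by the second factor of a
product probability space. -/
theorem storm_one_step
    {m : ℕ} {W Ξ : Type*} [MeasurableSpace W] [MeasurableSpace Ξ]
    (P : Measure W) [IsProbabilityMeasure P]
    (ν : Measure Ξ) [IsProbabilityMeasure ν]
    (z₀ : EuclideanSpace ℝ (Fin m))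
    (F : EuclideanSpace ℝ (Fin m) → EuclideanSpace ℝ (Fin m)) (hFmeas : Measurable F)
    (B G L : ℝ) (hB : 0 < B) (hG : 0 < G) (hL : 0 < L)
    -- the stochastic oracle: unbiased, (BG)-type variance, mean-square Lipschitz
    (Ft : EuclideanSpace ℝ (Fin m) → Ξ → EuclideanSpace ℝ (Fin m))
    (hFtmeas : Measurable (Function.uncurry Ft))
    (hFtL2 : ∀ z, MemLp (Ft z) 2 ν)
    (hmean : ∀ z, ∫ ξ, Ft z ξ ∂ν = F z)
    (hvar : ∀ z, ∫ ξ, ‖Ft z ξ - F z‖ ^ 2 ∂ν ≤ B ^ 2 * ‖z - z₀‖ ^ 2 + G ^ 2)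
    (hmslip : ∀ u v, ∫ ξ, ‖Ft u ξ - Ft v ξ‖ ^ 2 ∂ν ≤ L ^ 2 * ‖u - v‖ ^ 2)
    -- the random vectors measurable with respect to the past
    (zk zk1 gk : W → EuclideanSpace ℝ (Fin m))
    (hzkmeas : Measurable zk) (hzk1meas : Measurable zk1) (hgkmeas : Measurable gk)
    (hzkL2 : MemLp zk 2 P) (hzk1L2 : MemLp zk1 2 P) (hgkL2 : MemLp gk 2 P)
    (α : ℝ) (hα : α ∈ Set.Ioc (0 : ℝ) 1)
    -- the STORM update, on the product of the past with the fresh sample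
    (gk1 : W × Ξ → EuclideanSpace ℝ (Fin m))
    (hgk1 : ∀ p : W × Ξ, gk1 p = Ft (zk1 p.1) p.2 + (1 - α) • (gk p.1 - Ft (zk p.1) p.2)) :
    (α / 2) * ∫ w, ‖gk w - F (zk w)‖ ^ 2 ∂P
      ≤ (1 - α / 2) * (∫ w, ‖gk w - F (zk w)‖ ^ 2 ∂P)
        - (∫ p, ‖gk1 p - F (zk1 p.1)‖ ^ 2 ∂(P.prod ν))
        + 2 * L ^ 2 * (∫ w, ‖zk1 w - zk w‖ ^ 2 ∂P)
        + 2 * α ^ 2 * (B ^ 2 * (∫ w, ‖zk w - z₀‖ ^ 2 ∂P) + G ^ 2) :=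
  storm_one_step_general P ν z₀ F B G L Ft hFtL2 hmean hvar hmslip zk zk1 gk hzkL2 hzk1L2 hgkL2 α hα
    gk1 hgk1
end

section
/- Let Q ∈ ℝ^{d×d} be symmetric positive semidefinite, c ∈ ℝ^d, and f(x) = (1/(2d))⟨x, Qx⟩ + ⟨c, x⟩, and consider the stochastic gradient oracle g(x, i) = Q_{:i} x_i + c with i uniform on {1, …, d}. Assume f attains a minimizer x* ∈ ℝ^d, and assume there exists x̄ ∈ ℝ^d with Q x̄ = 0 but Q_{:j} x̄_j ≠ 0 for some index j. Then the ABC condition fails for this oracle: for every choice of constants a, b, c₀ ≥ 0 there exists x ∈ ℝ^d such that (1/d)Σ_{i=1}^{d} ‖Q_{:i} x_i + c‖² > c₀² + b²‖∇f(x)‖² + a²(f(x) − f(x*)). -/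
open scoped RealInnerProductSpace

/-! On the line `t • x̄` the quadratic term vanishes, so `f (t • x̄) = t ⟪c, x̄⟫`; as `f` is
bounded below this slope is zero. Hence `f` and `∇f = c` are constant on the line, while the
second moment of the oracle contains the term `‖t • (x̄_j Q_{:j}) + c‖² / d`, which is unbounded. -/

lemma eq_zero_of_forall_le_mul {m k : ℝ} (h : ∀ t : ℝ, m ≤ t * k) : k = 0 := by
  by_contra hk
  have := h ((m - 1) / k)
  rw [div_mul_cancel₀ _ hk] at this
  linarith

lemma exists_lt_norm_smul_add_sq {E : Type*} [NormedAddCommGroup E] [NormedSpace ℝ E]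
    {w : E} (hw : w ≠ 0) (c : E) (R : ℝ) : ∃ t : ℝ, R < ‖t • w + c‖ ^ 2 := by
  have hw' : 0 < ‖w‖ := norm_pos_iff.mpr hw
  set t := (|R| + 1 + ‖c‖) / ‖w‖
  have hnorm : |R| + 1 ≤ ‖t • w + c‖ := calc
    |R| + 1 = ‖t • w‖ - ‖c‖ := by
      rw [norm_smul, Real.norm_of_nonneg (by positivity), div_mul_cancel₀ _ hw'.ne']
      ring
    _ ≤ ‖t • w + c‖ := by simpa using norm_sub_norm_le (t • w) (-c)
  exact ⟨t, by nlinarith [le_abs_self R, abs_nonneg R]⟩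

theorem quadratic_oracle_abc_fails_general
    {d : ℕ} (Q : Matrix (Fin d) (Fin d) ℝ)
    (c : EuclideanSpace ℝ (Fin d))
    (f : EuclideanSpace ℝ (Fin d) → ℝ)
    (hf : ∀ x, f x = (1 / (2 * (d : ℝ))) *
        ⟪x, (WithLp.equiv 2 (Fin d → ℝ)).symm (Q.mulVec fun j => x j)⟫ + ⟪c, x⟫)
    (g : EuclideanSpace ℝ (Fin d) → Fin d → EuclideanSpace ℝ (Fin d))
    (hg : ∀ x i, g x i
      = x i • (WithLp.equiv 2 (Fin d → ℝ)).symm (fun j => Q j i) + c)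
    (xstar : EuclideanSpace ℝ (Fin d)) (hmin : ∀ y, f xstar ≤ f y)
    (xbar : EuclideanSpace ℝ (Fin d))
    (hker : Q.mulVec (fun j => xbar j) = 0)
    (hcol : ∃ j : Fin d,
      xbar j • (WithLp.equiv 2 (Fin d → ℝ)).symm (fun j' => Q j' j) ≠ 0) :
    ∀ a b c₀ : ℝ, 0 ≤ a → 0 ≤ b → 0 ≤ c₀ →
      ∃ x : EuclideanSpace ℝ (Fin d),
        c₀ ^ 2
            + b ^ 2 * ‖(d : ℝ)⁻¹ •
                (WithLp.equiv 2 (Fin d → ℝ)).symm (Q.mulVec fun j => x j) + c‖ ^ 2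
            + a ^ 2 * (f x - f xstar)
          < (d : ℝ)⁻¹ * ∑ i, ‖g x i‖ ^ 2 := by
  intro a b c₀ _ _ _
  obtain ⟨j, hj⟩ := hcol
  have hd : (0 : ℝ) < d := by exact_mod_cast j.pos
  have hker_smul (t : ℝ) : Q.mulVec (fun i => (t • xbar) i) = 0 := by
    rw [show (fun i => (t • xbar) i) = t • fun i => xbar i from rfl, Matrix.mulVec_smul, hker,
      smul_zero]
  have hf_smul (t : ℝ) : f (t • xbar) = t * ⟪c, xbar⟫ := by
    rw [hf, hker_smul]
    simp [real_inner_smul_right]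
  have hcxbar : ⟪c, xbar⟫ = 0 := eq_zero_of_forall_le_mul fun t => hf_smul t ▸ hmin _
  have hfstar : f xstar ≤ 0 := by simpa only [hf_smul, zero_mul] using hmin ((0 : ℝ) • xbar)
  obtain ⟨t, ht⟩ := exists_lt_norm_smul_add_sq hj c
    (d * (c₀ ^ 2 + b ^ 2 * ‖c‖ ^ 2 - a ^ 2 * f xstar))
  refine ⟨t • xbar, ?_⟩
  have hgj : ‖g (t • xbar) j‖ ^ 2 ≤ ∑ i, ‖g (t • xbar) i‖ ^ 2 :=
    Finset.single_le_sum (f := fun i => ‖g (t • xbar) i‖ ^ 2) (fun i _ => sq_nonneg _)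
      (Finset.mem_univ j)
  rw [hg, PiLp.smul_apply, smul_eq_mul, mul_smul] at hgj
  rw [hker_smul, hf_smul, hcxbar, lt_inv_mul_iff₀ hd]
  simp only [WithLp.equiv_symm_apply, WithLp.toLp_zero, smul_zero, zero_add, mul_zero]
  linarith

/-- For the quadratic `f(x) = (1/(2d))⟨x, Qx⟩ + ⟨c, x⟩` with the
column-sampling oracle `g(x,i) = Q_{:i} x_i + c`, if there is a point `x̄`
with `Q x̄ = 0` but `Q_{:j} x̄_j ≠ 0` for some `j`, then the ABC condition
fails: no constants `a, b, c₀ ≥ 0` make the oracle's second moment bounded by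
`c₀² + b²‖∇f(x)‖² + a²(f(x) − f(x*))` for all `x`
(here `∇f(x) = (1/d) Q x + c`). -/
theorem quadratic_oracle_abc_fails
    {d : ℕ} (hd : 0 < d) (Q : Matrix (Fin d) (Fin d) ℝ)
    (hQsymm : Q.IsSymm) (hQpsd : Q.PosSemidef)
    (c : EuclideanSpace ℝ (Fin d))
    (f : EuclideanSpace ℝ (Fin d) → ℝ)
    (hf : ∀ x, f x = (1 / (2 * (d : ℝ))) *
        ⟪x, (WithLp.equiv 2 (Fin d → ℝ)).symm (Q.mulVec fun j => x j)⟫ + ⟪c, x⟫)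
    (g : EuclideanSpace ℝ (Fin d) → Fin d → EuclideanSpace ℝ (Fin d))
    (hg : ∀ x i, g x i
      = x i • (WithLp.equiv 2 (Fin d → ℝ)).symm (fun j => Q j i) + c)
    (xstar : EuclideanSpace ℝ (Fin d)) (hmin : ∀ y, f xstar ≤ f y)
    (xbar : EuclideanSpace ℝ (Fin d))
    (hker : Q.mulVec (fun j => xbar j) = 0)
    (hcol : ∃ j : Fin d,
      xbar j • (WithLp.equiv 2 (Fin d → ℝ)).symm (fun j' => Q j' j) ≠ 0) :
    ∀ a b c₀ : ℝ, 0 ≤ a → 0 ≤ b → 0 ≤ c₀ →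
      ∃ x : EuclideanSpace ℝ (Fin d),
        c₀ ^ 2
            + b ^ 2 * ‖(d : ℝ)⁻¹ •
                (WithLp.equiv 2 (Fin d → ℝ)).symm (Q.mulVec fun j => x j) + c‖ ^ 2
            + a ^ 2 * (f x - f xstar)
          < (d : ℝ)⁻¹ * ∑ i, ‖g x i‖ ^ 2 :=
  quadratic_oracle_abc_fails_general Q c f hf g hg xstar hmin xbar hker hcol
end
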